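/- For every z ∈ ℂ with |z| = 1, every θ ∈ {+1,−1}, and every ψ ∈ ℂ², the bilinear Dirac form of the charge-conjugation projection vanishes: (P^z_θψ)†·γ⁰·(P^z_θψ) = 0, where ψ† = (ψ*)ᵀ is the conjugate transpose. -/

import Mathlib

open Matrix Complex

noncomputable section

/-- Pauli matrix `σ¹ = [[0,1],[1,0]]`. -/
def σ1 : Matrix (Fin 2) (Fin 2) ℂ := !![0, 1; 1, 0]

/-- Pauli matrix `σ³ = [[1,0],[0,−1]]`. -/
def σ3 : Matrix (Fin 2) (Fin 2) ℂ := !![1, 0; 0, -1]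

/-- Two-dimensional `γ⁰ = σ³`. -/
def gamma0 : Matrix (Fin 2) (Fin 2) ℂ := σ3

/-- Two-dimensional `γ² = −iσ¹`. -/
def gamma2 : Matrix (Fin 2) (Fin 2) ℂ := -(I • σ1)

/-- Entrywise complex conjugation `ψ*` of a vector `ψ ∈ ℂ²`. -/
def vstar (ψ : Fin 2 → ℂ) : Fin 2 → ℂ := fun i => starRingEnd ℂ (ψ i)

/-- The charge conjugation operator `C^z_θ ψ = θ·z·γ²ψ*`. -/
def CC (z : ℂ) (θ : ℝ) (ψ : Fin 2 → ℂ) : Fin 2 → ℂ :=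
  ((θ : ℂ) * z) • gamma2.mulVec (vstar ψ)

/-- The projection `P^z_θ ψ = ½(ψ + C^z_θ ψ)`. -/
def PP (z : ℂ) (θ : ℝ) (ψ : Fin 2 → ℂ) : Fin 2 → ℂ :=
  (1 / 2 : ℂ) • (ψ + CC z θ ψ)

/-! `C^z_θ` is antilinear with `(C^z_θ)² = θ²|z|²`, so for `θ²|z|² = 1` it is an involution and
`P^z_θ ψ` is a fixed point of it. Writing `C^z_θ φ = -iθz (φ̄₁, φ̄₀)`, conjugation swaps the two
components up to a factor of modulus `|θz|`, hence `φ̄γ⁰φ = |φ₀|² - |φ₁|²` changes sign under it,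
and so vanishes on its fixed points. -/

open ComplexConjugate

def diracBilinear (φ : Fin 2 → ℂ) : ℂ := vstar φ ⬝ᵥ gamma0 *ᵥ φ

lemma diracBilinear_eq (φ : Fin 2 → ℂ) :
    diracBilinear φ = conj (φ 0) * φ 0 - conj (φ 1) * φ 1 := by
  simp [diracBilinear, vstar, gamma0, σ3, dotProduct, mulVec, Fin.sum_univ_two]
  ring

lemma CC_apply_zero (z : ℂ) (θ : ℝ) (ψ : Fin 2 → ℂ) :
    CC z θ ψ 0 = -(I * θ * z) * conj (ψ 1) := by
  simp [CC, gamma2, σ1, vstar, dotProduct, Fin.sum_univ_two]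
  ring

lemma CC_apply_one (z : ℂ) (θ : ℝ) (ψ : Fin 2 → ℂ) :
    CC z θ ψ 1 = -(I * θ * z) * conj (ψ 0) := by
  simp [CC, gamma2, σ1, vstar, dotProduct, Fin.sum_univ_two]
  ring

lemma vstar_add (ψ φ : Fin 2 → ℂ) : vstar (ψ + φ) = vstar ψ + vstar φ :=
  funext fun _ => map_add _ _ _

lemma vstar_smul (c : ℂ) (ψ : Fin 2 → ℂ) : vstar (c • ψ) = conj c • vstar ψ :=
  funext fun _ => map_mul _ _ _

lemma CC_add (z : ℂ) (θ : ℝ) (ψ φ : Fin 2 → ℂ) :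
    CC z θ (ψ + φ) = CC z θ ψ + CC z θ φ := by
  rw [CC, vstar_add, mulVec_add, smul_add, CC, CC]

lemma CC_smul (z : ℂ) (θ : ℝ) (c : ℂ) (ψ : Fin 2 → ℂ) :
    CC z θ (c • ψ) = conj c • CC z θ ψ := by
  rw [CC, vstar_smul, mulVec_smul, smul_comm, CC]

lemma CC_CC (z : ℂ) (θ : ℝ) (ψ : Fin 2 → ℂ) :
    CC z θ (CC z θ ψ) = ((θ ^ 2 * normSq z : ℝ) : ℂ) • ψ := by
  ext i
  fin_cases i <;>
  · simp only [Fin.zero_eta, Fin.mk_one, CC_apply_zero, CC_apply_one, Pi.smul_apply, smul_eq_mul,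
      map_mul, map_neg, conj_I, conj_ofReal, conj_conj, ofReal_mul, ofReal_pow,
      normSq_eq_conj_mul_self]
    linear_combination -(θ : ℂ) ^ 2 * conj z * z * ψ _ * I_sq

lemma CC_PP {z : ℂ} {θ : ℝ} (h : θ ^ 2 * normSq z = 1) (ψ : Fin 2 → ℂ) :
    CC z θ (PP z θ ψ) = PP z θ ψ := by
  rw [PP, CC_smul, CC_add, CC_CC, h, ofReal_one, one_smul, add_comm, map_div₀, map_one, map_ofNat]

lemma diracBilinear_CC (z : ℂ) (θ : ℝ) (φ : Fin 2 → ℂ) :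
    diracBilinear (CC z θ φ) = -((θ ^ 2 * normSq z : ℝ) : ℂ) * diracBilinear φ := by
  simp only [diracBilinear_eq, CC_apply_zero, CC_apply_one, map_mul, map_neg, conj_I, conj_ofReal,
    conj_conj, ofReal_mul, ofReal_pow, normSq_eq_conj_mul_self]
  linear_combination (θ : ℂ) ^ 2 * conj z * z * (conj (φ 0) * φ 0 - conj (φ 1) * φ 1) * I_sq

lemma diracBilinear_eq_zero_of_CC_eq_self {z : ℂ} {θ : ℝ} (h : θ ^ 2 * normSq z = 1)
    {φ : Fin 2 → ℂ} (hφ : CC z θ φ = φ) : diracBilinear φ = 0 := by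
  have hneg := diracBilinear_CC z θ φ
  rw [hφ, h, ofReal_one] at hneg
  linear_combination hneg / 2

/-- For `|z| = 1`, `θ ∈ {+1,−1}`, `ψ ∈ ℂ²`: `(P^z_θψ)†·γ⁰·(P^z_θψ) = 0`. -/
theorem proj_bilinear_form_vanishes_2d (z : ℂ) (hz : ‖z‖ = 1)
    (θ : ℝ) (hθ : θ = 1 ∨ θ = -1) (ψ : Fin 2 → ℂ) :
    vstar (PP z θ ψ) ⬝ᵥ gamma0.mulVec (PP z θ ψ) = 0 := by
  have hθz : θ ^ 2 * normSq z = 1 := by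
    rw [normSq_eq_norm_sq, hz]
    rcases hθ with rfl | rfl <;> norm_num
  exact diracBilinear_eq_zero_of_CC_eq_self hθz (CC_PP hθz ψ)
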